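/- Under the hypotheses of the smooth case (β-smoothness of each u_i on B(θ,d), ‖∇L(θ)‖₂ ≤ ε, d as given), θ is (d,k)-pseudo core-stable: there is no θ' with ‖θ'−θ‖₂ < d and nonempty coalition S ⊆ [n] such that (|S|/(kn))·u_i(θ') ≥ u_i(θ) for all i ∈ S with at least one strict inequality. -/

import Mathlib

/-!
If a coalition `S` blocks `θ` at `θ'`, then `∑ᵢ uᵢ(θ')/uᵢ(θ) > kn` (the members of `S` alone
contribute more than `kn`, the others contribute positively). Dividing the smoothness bound by
`uᵢ(θ)` and summing, the first-order terms add up to `⟪∇L(θ), θ' - θ⟫ ≤ ε t` with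
`t = ‖θ' - θ‖`, so `(k - 1) n < ε t + (β/2) (∑ᵢ uᵢ(θ)⁻¹) t²`. The radius `d` is exactly the positive
root of this quadratic in `t`, so `t ≥ d`.
-/

open Finset

lemma quadratic_lt_of_lt_root {a b c t : ℝ} (ha : 0 < a) (hb : 0 ≤ b) (ht : 0 ≤ t)
    (htd : t < (-b + √(b ^ 2 + 2 * a * c)) / a) :
    b * t + a / 2 * t ^ 2 < c := by
  have hlt : a * t + b < √(b ^ 2 + 2 * a * c) := by
    rw [lt_div_iff₀ ha] at htd
    linarith
  rw [Real.lt_sqrt (by positivity)] at hlt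
  nlinarith

lemma lt_sum_div_of_blocking {ι : Type*} [Fintype ι] {x y : ι → ℝ} {S : Finset ι} {m : ℝ}
    (hm : 0 < m) (hx : ∀ i, 0 < x i) (hy : ∀ i, 0 < y i)
    (hle : ∀ i ∈ S, x i ≤ #S / m * y i) (hlt : ∃ i ∈ S, x i < #S / m * y i) :
    m < ∑ i, y i / x i := by
  have hS : (0 : ℝ) < #S := by
    obtain ⟨i, hi, -⟩ := hlt
    exact_mod_cast card_pos.2 ⟨i, hi⟩
  have hratio {i : ι} (h : x i ≤ #S / m * y i) : m / #S ≤ y i / x i := by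
    rw [div_le_div_iff₀ hS (hx i)]
    rw [div_mul_eq_mul_div, le_div_iff₀ hm] at h
    linarith
  have hratio_lt {i : ι} (h : x i < #S / m * y i) : m / #S < y i / x i := by
    rw [div_lt_div_iff₀ hS (hx i)]
    rw [div_mul_eq_mul_div, lt_div_iff₀ hm] at h
    linarith
  calc m = ∑ _i ∈ S, m / #S := by rw [sum_const, nsmul_eq_mul]; field_simp
    _ < ∑ i ∈ S, y i / x i :=
      sum_lt_sum (fun i hi => hratio (hle i hi)) (hlt.imp fun i ⟨hi, h⟩ => ⟨hi, hratio_lt h⟩)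
    _ ≤ ∑ i, y i / x i :=
      sum_le_sum_of_subset_of_nonneg (subset_univ S) fun i _ _ => (div_pos (hy i) (hx i)).le

lemma sum_div_le_of_le_add_inner {ι E : Type*} [Fintype ι] [NormedAddCommGroup E]
    [InnerProductSpace ℝ E] {x y : ι → ℝ} (g : ι → E) (v : E) (c : ℝ) (hx : ∀ i, 0 < x i)
    (h : ∀ i, y i ≤ x i + inner ℝ (g i) v + c) :
    ∑ i, y i / x i ≤ Fintype.card ι + inner ℝ (∑ i, (x i)⁻¹ • g i) v + c * ∑ i, (x i)⁻¹ := by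
  have hterm (i : ι) : y i / x i ≤ 1 + (x i)⁻¹ * inner ℝ (g i) v + c * (x i)⁻¹ := by
    rw [div_le_iff₀ (hx i)]
    have hxi : (x i)⁻¹ * x i = 1 := inv_mul_cancel₀ (hx i).ne'
    linear_combination h i - (inner ℝ (g i) v + c) * hxi
  calc ∑ i, y i / x i ≤ ∑ i, (1 + (x i)⁻¹ * inner ℝ (g i) v + c * (x i)⁻¹) :=
        sum_le_sum fun i _ => hterm i
    _ = Fintype.card ι + inner ℝ (∑ i, (x i)⁻¹ • g i) v + c * ∑ i, (x i)⁻¹ := by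
        simp only [sum_add_distrib, sum_inner, real_inner_smul_left, ← mul_sum, sum_const,
          card_univ, nsmul_eq_mul, mul_one]

theorem smooth_approx_stationary_pseudo_core_stable_general
    {p : ℕ} (n : ℕ) (u : Fin n → EuclideanSpace ℝ (Fin p) → ℝ)
    (hpos : ∀ i θ, 0 < u i θ)
    (β k ε d : ℝ) (hβ : 0 < β) (hk : 1 < k) (hε : 0 ≤ ε)
    (θ : EuclideanSpace ℝ (Fin p))
    (hsmooth : ∀ i, ∀ θ' : EuclideanSpace ℝ (Fin p), ‖θ' - θ‖ ≤ d →
      u i θ' ≤ u i θ + inner ℝ (gradient (u i) θ) (θ' - θ) + β / 2 * ‖θ' - θ‖ ^ 2)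
    (hgrad : ‖∑ i : Fin n, (u i θ)⁻¹ • gradient (u i) θ‖ ≤ ε)
    (hd : d = (-ε + Real.sqrt (ε ^ 2 + 2 * β * (k - 1) * n * ∑ i : Fin n, (u i θ)⁻¹)) /
      (β * ∑ i : Fin n, (u i θ)⁻¹)) :
    ¬ ∃ θ' : EuclideanSpace ℝ (Fin p), ‖θ' - θ‖ < d ∧
      ∃ S : Finset (Fin n), S.Nonempty ∧
        (∀ i ∈ S, (S.card : ℝ) / (k * n) * u i θ' ≥ u i θ) ∧
        (∃ i ∈ S, (S.card : ℝ) / (k * n) * u i θ' > u i θ) := by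
  rintro ⟨θ', hθ', S, ⟨i₀, -⟩, hle, hlt⟩
  have hn : (0 : ℝ) < n := by exact_mod_cast i₀.pos
  have hU : 0 < ∑ i, (u i θ)⁻¹ := sum_pos (fun i _ => inv_pos.2 (hpos i θ)) ⟨i₀, mem_univ _⟩
  have hblock : k * n < ∑ i, u i θ' / u i θ :=
    lt_sum_div_of_blocking (by positivity) (hpos · θ) (hpos · θ') hle hlt
  have hsum := sum_div_le_of_le_add_inner (fun i => gradient (u i) θ) (θ' - θ)
    (β / 2 * ‖θ' - θ‖ ^ 2) (hpos · θ) (fun i => hsmooth i θ' hθ'.le)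
  have hcs : inner ℝ (∑ i, (u i θ)⁻¹ • gradient (u i) θ) (θ' - θ) ≤ ε * ‖θ' - θ‖ :=
    (real_inner_le_norm _ _).trans (mul_le_mul_of_nonneg_right hgrad (norm_nonneg _))
  have hroot := quadratic_lt_of_lt_root (c := (k - 1) * n) (mul_pos hβ hU) hε (norm_nonneg _)
    (hθ'.trans_eq (by rw [hd]; ring_nf))
  simp only [Fintype.card_fin] at hsum
  linarith

/-- Under the hypotheses of the smooth case, `θ` is `(d,k)`-pseudo core-stable:
there is no `θ'` within distance `d` and nonempty coalition `S` with
`(|S|/(k·n))·u i θ' ≥ u i θ` for all `i ∈ S` with at least one strict inequality. -/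
theorem smooth_approx_stationary_pseudo_core_stable
    {p : ℕ} (n : ℕ) (u : Fin n → EuclideanSpace ℝ (Fin p) → ℝ)
    (hpos : ∀ i θ, 0 < u i θ)
    (hdiff : ∀ i, Differentiable ℝ (u i))
    (β k ε d : ℝ) (hβ : 0 < β) (hk : 1 < k) (hε : 0 ≤ ε)
    (θ : EuclideanSpace ℝ (Fin p))
    (hsmooth : ∀ i, ∀ θ' : EuclideanSpace ℝ (Fin p), ‖θ' - θ‖ ≤ d →
      u i θ' ≤ u i θ + inner ℝ (gradient (u i) θ) (θ' - θ) + β / 2 * ‖θ' - θ‖ ^ 2)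
    (hgrad : ‖∑ i : Fin n, (u i θ)⁻¹ • gradient (u i) θ‖ ≤ ε)
    (hd : d = (-ε + Real.sqrt (ε ^ 2 + 2 * β * (k - 1) * n * ∑ i : Fin n, (u i θ)⁻¹)) /
      (β * ∑ i : Fin n, (u i θ)⁻¹)) :
    ¬ ∃ θ' : EuclideanSpace ℝ (Fin p), ‖θ' - θ‖ < d ∧
      ∃ S : Finset (Fin n), S.Nonempty ∧
        (∀ i ∈ S, (S.card : ℝ) / (k * n) * u i θ' ≥ u i θ) ∧
        (∃ i ∈ S, (S.card : ℝ) / (k * n) * u i θ' > u i θ) :=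
  smooth_approx_stationary_pseudo_core_stable_general n u hpos β k ε d hβ hk hε θ hsmooth hgrad hd
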